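/- arXiv:1602.02289 — 3 statements merged into one kernel-verified Lean document; each statement's English description precedes it below -/
import Mathlib

section
/- For any coloring φ of the pairs of [n] with two colors (red/green), the 3-uniform hypergraph H_φ on vertex set [n], whose hyperedges are the triples {i,j,k} with i<j<k such that the colors of {i,j} and {i,k} differ, contains no copy of K_4^{(3)} (i.e., no four vertices spanning all four triples as hyperedges). -/
/-!
If `m` is the least of four vertices, each of the three triples through `m` is a hyperedge because
of the colours at `m` itself, so `φ m x`, `φ m y`, `φ m z` would be pairwise different, which two
colours cannot provide.
-/

section SplitTriple

variable {α β : Type*} [LinearOrder α]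

/-- The hyperedges of `H_φ`. -/
def IsSplitTriple (φ : α → α → β) (S : Finset α) : Prop :=
  ∃ i j k : α, i < j ∧ j < k ∧ S = {i, j, k} ∧ φ i j ≠ φ i k

variable {φ : α → α → β} {S : Finset α} {m x y : α}

theorem IsSplitTriple.card_eq_three (h : IsSplitTriple φ S) : S.card = 3 := by
  obtain ⟨i, j, k, hij, hjk, rfl, -⟩ := h
  exact Finset.card_eq_three.mpr ⟨i, j, k, hij.ne, (hij.trans hjk).ne, hjk.ne, rfl⟩

theorem IsSplitTriple.apply_ne_apply_of_le (hx : m ≤ x) (hy : m ≤ y)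
    (h : IsSplitTriple φ {m, x, y}) : φ m x ≠ φ m y := by
  have hcard := h.card_eq_three
  obtain ⟨i, j, k, hij, hjk, hS, hne⟩ := h
  have hmi : m = i := by
    have hi : i ∈ ({m, x, y} : Finset α) := hS ▸ by simp
    have hm : m ∈ ({i, j, k} : Finset α) := hS ▸ by simp
    simp only [Finset.mem_insert, Finset.mem_singleton] at hi hm
    rcases hi with hi | hi | hi <;> rcases hm with hm | hm | hm <;> order
  subst hmi
  have hm_notMem : m ∉ ({x, y} : Finset α) := by
    intro hmem
    have := Finset.card_le_two (a := x) (b := y)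
    rw [Finset.insert_eq_of_mem hmem] at hcard
    omega
  have hpair : ({x, y} : Finset α) = {j, k} := by
    rw [← Finset.erase_insert hm_notMem, hS, Finset.erase_insert (by simp [hij.ne, (hij.trans hjk).ne])]
  have hpair' : ({x, y} : Set α) = {j, k} := by rw [← Finset.coe_pair, hpair, Finset.coe_pair]
  rcases Set.pair_eq_pair_iff.mp hpair' with ⟨rfl, rfl⟩ | ⟨rfl, rfl⟩
  · exact hne
  · exact hne.symm

theorem not_isSplitTriple_of_le {φ : α → α → Bool} {z : α} (hx : m ≤ x) (hy : m ≤ y) (hz : m ≤ z)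
    (hxy : IsSplitTriple φ {m, x, y}) (hxz : IsSplitTriple φ {m, x, z})
    (hyz : IsSplitTriple φ {m, y, z}) : False := by
  have h₁ := hxy.apply_ne_apply_of_le hx hy
  have h₂ := hxz.apply_ne_apply_of_le hx hz
  have h₃ := hyz.apply_ne_apply_of_le hy hz
  revert h₁ h₂ h₃
  generalize φ m x = p, φ m y = q, φ m z = r
  decide +revert

end SplitTriple

theorem stmt_0_general (n : ℕ) (φ : Fin n → Fin n → Bool)
    (isEdge : Finset (Fin n) → Prop)
    (hEdge : ∀ S, isEdge S ↔
      ∃ i j k : Fin n, i < j ∧ j < k ∧ S = {i, j, k} ∧ φ i j ≠ φ i k) :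
    ∀ a b c d : Fin n, ({a, b, c, d} : Finset (Fin n)).card = 4 →
      ¬ (isEdge {a, b, c} ∧ isEdge {a, b, d} ∧ isEdge {a, c, d} ∧ isEdge {b, c, d}) := by
  obtain rfl : isEdge = IsSplitTriple φ := funext fun S => propext (hEdge S)
  rintro a b c d - ⟨habc, habd, hacd, hbcd⟩
  obtain ⟨m, hm, hmin⟩ : ∃ m ∈ ({a, b, c, d} : Finset (Fin n)),
      ∀ s ∈ ({a, b, c, d} : Finset (Fin n)), m ≤ s :=
    ⟨_, Finset.min'_mem _ ⟨a, by simp⟩, fun s hs => Finset.min'_le _ s hs⟩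
  simp only [Finset.mem_insert, Finset.mem_singleton, forall_eq_or_imp, forall_eq] at hm hmin
  obtain ⟨ha, hb, hc, hd⟩ := hmin
  rcases hm with rfl | rfl | rfl | rfl
  · exact not_isSplitTriple_of_le hb hc hd habc habd hacd
  · rw [Finset.insert_comm] at habc habd
    exact not_isSplitTriple_of_le ha hc hd habc habd hbcd
  · rw [Finset.pair_comm, Finset.insert_comm] at habc
    rw [Finset.insert_comm] at hacd hbcd
    exact not_isSplitTriple_of_le ha hb hd habc hacd hbcd
  · rw [Finset.pair_comm, Finset.insert_comm] at habd hacd hbcd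
    exact not_isSplitTriple_of_le ha hb hc habd hacd hbcd

/-- For any 2-coloring of the pairs of [n], the hypergraph whose
hyperedges are triples {i,j,k} with i<j<k such that φ(i,j) ≠ φ(i,k) contains no
tetrahedron K₄⁽³⁾. -/
theorem stmt_0 (n : ℕ) (φ : Fin n → Fin n → Bool) (hsym : ∀ i j, φ i j = φ j i)
    (isEdge : Finset (Fin n) → Prop)
    (hEdge : ∀ S, isEdge S ↔
      ∃ i j k : Fin n, i < j ∧ j < k ∧ S = {i, j, k} ∧ φ i j ≠ φ i k) :
    ∀ a b c d : Fin n, ({a, b, c, d} : Finset (Fin n)).card = 4 →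
      ¬ (isEdge {a, b, c} ∧ isEdge {a, b, d} ∧ isEdge {a, c, d} ∧ isEdge {b, c, d}) :=
  stmt_0_general n φ isEdge hEdge
end

section
/- If a 3-uniform hypergraph H on n vertices is (d,η,▭▭)-quasirandom (pair–pair quasirandom), then it is (d,η,▭•)-quasirandom (pair–vertex quasirandom). -/
open Finset

/-! Apply pair–pair quasirandomness to `V × X` and `P`: the pairs `((w, x), (y, z))` with
`w = y` are exactly the images of the `(x, (y, z)) ∈ X × P` under `(x, (y, z)) ↦ ((y, x), (y, z))`,
and for them `{w, x, z} = {x, y, z}`. So both counts in the hypothesis become the counts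
`e(X, P)` and `|X| |P|` of the conclusion. -/

def pairPairEmbedding (V : Type*) : V × (V × V) ↪ (V × V) × (V × V) where
  toFun t := ((t.2.1, t.1), t.2)
  inj' := by
    rintro ⟨x, y, z⟩ ⟨x', y', z'⟩ h
    simp only [Prod.mk.injEq] at h
    simp [h]

theorem filter_fst_eq_univ_product_eq_map {V : Type*} [Fintype V] [DecidableEq V]
    (X : Finset V) (P : Finset (V × V)) :
    ((univ ×ˢ X) ×ˢ P).filter (fun t => t.1.1 = t.2.1) = (X ×ˢ P).map (pairPairEmbedding V) := by
  ext ⟨⟨w, x⟩, y, z⟩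
  simp only [mem_filter, mem_product, mem_univ, true_and, mem_map, pairPairEmbedding, Prod.exists]
  constructor
  · rintro ⟨⟨hx, hyz⟩, rfl⟩
    exact ⟨x, w, z, ⟨hx, hyz⟩, rfl⟩
  · rintro ⟨x, y, z, ⟨hx, hyz⟩, ⟨⟩⟩
    exact ⟨⟨hx, hyz⟩, rfl⟩

theorem card_filter_fst_eq_univ_product {V : Type*} [Fintype V] [DecidableEq V]
    (X : Finset V) (P : Finset (V × V)) :
    (((univ ×ˢ X) ×ˢ P).filter (fun t => t.1.1 = t.2.1)).card = X.card * P.card := by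
  rw [filter_fst_eq_univ_product_eq_map, card_map, card_product]

theorem card_filter_fst_eq_and_mem_univ_product {V : Type*} [Fintype V] [DecidableEq V]
    (E : Finset (Finset V)) (X : Finset V) (P : Finset (V × V)) :
    (((univ ×ˢ X) ×ˢ P).filter (fun t =>
        t.1.1 = t.2.1 ∧ ({t.1.1, t.1.2, t.2.2} : Finset V) ∈ E)).card
      = ((X ×ˢ P).filter (fun t => ({t.1, t.2.1, t.2.2} : Finset V) ∈ E)).card := by
  rw [← filter_filter, filter_fst_eq_univ_product_eq_map, filter_map, card_map]
  congr 1
  refine filter_congr fun t _ => ?_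
  show ({t.2.1, t.1, t.2.2} : Finset V) ∈ E ↔ _
  rw [insert_comm]

/-- (d,η,▭▭)-quasirandom implies (d,η,▭•)-quasirandom. -/
theorem stmt_1 {V : Type*} [Fintype V] [DecidableEq V] (E : Finset (Finset V)) (d η : ℝ)
    (hPP : ∀ P Q : Finset (V × V),
      |((((P ×ˢ Q).filter (fun t =>
            t.1.1 = t.2.1 ∧ ({t.1.1, t.1.2, t.2.2} : Finset V) ∈ E)).card : ℝ)
        - d * (((P ×ˢ Q).filter (fun t => t.1.1 = t.2.1)).card : ℝ))|
        ≤ η * (Fintype.card V : ℝ) ^ 3) :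
    ∀ (X : Finset V) (P : Finset (V × V)),
      |(((X ×ˢ P).filter (fun t => ({t.1, t.2.1, t.2.2} : Finset V) ∈ E)).card : ℝ)
        - d * (X.card : ℝ) * (P.card : ℝ)| ≤ η * (Fintype.card V : ℝ) ^ 3 := by
  intro X P
  have h := hPP (univ ×ˢ X) P
  rwa [card_filter_fst_eq_and_mem_univ_product, card_filter_fst_eq_univ_product, Nat.cast_mul,
    ← mul_assoc] at h
end

section
/- Let A be a tripartite 3-uniform hypergraph with finite vertex classes P¹², P¹⁴, P²⁴, each hyperedge meeting every class once. Fix a vertex Q ∈ P²⁴ and subsets J¹² ⊆ P¹², J¹⁴ ⊆ P¹⁴ such that J¹²∪J¹⁴∪{Q} together with a set J²⁴ ∋ Q spans no hyperedge with one vertex in each of J¹², J¹⁴, J²⁴ (in particular no hyperedge uses Q, a vertex of J¹⁴, and a vertex of J¹²). Suppose also X ⊆ P¹⁴ with |X| ≤ δ|P¹⁴|, and for every R ∈ P¹⁴ ∖ (J¹⁴ ∪ X) the codegree codeg(R,Q) is at most (p+1)δ|P¹²|, where |J¹²| ≥ pδ|P¹²|. Then the degree of Q satisfies deg(Q) ≤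 |J¹⁴|(1 − pδ)|P¹²| + |X||P¹²| + (|P¹⁴| − |J¹⁴|)(p+1)δ|P¹²|. -/
open Finset

/- Split `P¹⁴` into `J¹⁴`, the part of `X` outside `J¹⁴`, and the rest. For `R ∈ J¹⁴` every
common neighbour of `R` and `Q` avoids `J¹²`, so the codegree is at most `|P¹²| - |J¹²|`
`≤ (1 - pδ)|P¹²|`; on `X` the codegree is trivially at most `|P¹²|`; on the rest it is bounded
by hypothesis. -/

theorem Finset.sum_le_of_bound_on_three_parts {ι : Type*} [DecidableEq ι]
    {s t u : Finset ι} {f : ι → ℝ} {a b c : ℝ} (ht : t ⊆ s) (hb : 0 ≤ b) (hc : 0 ≤ c)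
    (hft : ∀ i ∈ t, f i ≤ a) (hfu : ∀ i ∈ u, f i ≤ b) (hfrest : ∀ i ∈ s \ (t ∪ u), f i ≤ c) :
    ∑ i ∈ s, f i ≤ t.card * a + u.card * b + (s.card - t.card) * c := by
  have hrest : (s \ t) \ u = s \ (t ∪ u) := sdiff_sdiff_left
  rw [← sum_sdiff ht, ← sum_sdiff (inter_subset_left (s₂ := u)), sdiff_inter_self_left, hrest]
  have hsum_t : ∑ i ∈ t, f i ≤ t.card * a := by
    simpa using sum_le_sum hft
  have hsum_u : ∑ i ∈ (s \ t) ∩ u, f i ≤ u.card * b :=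
    calc ∑ i ∈ (s \ t) ∩ u, f i ≤ ((s \ t) ∩ u).card * b := by
          simpa using sum_le_sum fun i hi => hfu i (mem_inter.1 hi).2
      _ ≤ u.card * b := by gcongr; exact inter_subset_right
  have hsum_rest : ∑ i ∈ s \ (t ∪ u), f i ≤ (s.card - t.card) * c :=
    calc ∑ i ∈ s \ (t ∪ u), f i ≤ (s \ (t ∪ u)).card * c := by
          simpa using sum_le_sum hfrest
      _ ≤ (s \ t).card * c := by gcongr; exact subset_union_left
      _ = (s.card - t.card) * c := by rw [card_sdiff_of_subset ht, Nat.cast_sub (card_le_card ht)]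
  linarith

theorem Finset.card_filter_le_card_sub_of_subset {α : Type*} [DecidableEq α]
    {s t : Finset α} {p : α → Prop} [DecidablePred p] (ht : t ⊆ s) (hp : ∀ x ∈ t, ¬ p x) :
    ((s.filter p).card : ℝ) ≤ s.card - t.card := by
  have hsub : s.filter p ⊆ s \ t := fun x hx =>
    mem_sdiff.2 ⟨(mem_filter.1 hx).1, fun hxt => hp x hxt (mem_filter.1 hx).2⟩
  calc ((s.filter p).card : ℝ) ≤ (s \ t).card := by exact_mod_cast card_le_card hsub
    _ = s.card - t.card := by rw [card_sdiff_of_subset ht, Nat.cast_sub (card_le_card ht)]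

theorem stmt_13_general {V : Type*} [DecidableEq V] (P12 P14 : Finset V)
    (A : V → V → V → Bool) (Q : V)
    (J12 J14 X : Finset V) (hJ12 : J12 ⊆ P12) (hJ14 : J14 ⊆ P14)
    (δ : ℝ) (p : ℕ) (hδ : 0 < δ)
    (hind : ∀ S ∈ J12, ∀ R ∈ J14, ¬ (A S R Q = true))
    (hcod : ∀ R ∈ P14 \ (J14 ∪ X),
      ((P12.filter (fun S => A S R Q = true)).card : ℝ) ≤ ((p : ℝ) + 1) * δ * P12.card)
    (hJ12card : (J12.card : ℝ) ≥ (p : ℝ) * δ * P12.card) :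
    (∑ R ∈ P14, ((P12.filter (fun S => A S R Q = true)).card : ℝ))
      ≤ (J14.card : ℝ) * (1 - (p : ℝ) * δ) * P12.card
        + (X.card : ℝ) * P12.card
        + ((P14.card : ℝ) - J14.card) * ((p : ℝ) + 1) * δ * P12.card := by
  have hcod_J14 : ∀ R ∈ J14,
      ((P12.filter (fun S => A S R Q = true)).card : ℝ) ≤ (1 - (p : ℝ) * δ) * P12.card := by
    intro R hR
    have := card_filter_le_card_sub_of_subset hJ12 fun S hS => hind S hS R hR
    linarith
  have hcod_X : ∀ R ∈ X, ((P12.filter (fun S => A S R Q = true)).card : ℝ) ≤ P12.card :=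
    fun R _ => by exact_mod_cast card_filter_le _ _
  refine (sum_le_of_bound_on_three_parts hJ14 (Nat.cast_nonneg _) (by positivity)
    hcod_J14 hcod_X hcod).trans_eq ?_
  ring

/-- bound on the degree of Q obtained by splitting the codegree
sum over J¹⁴, X, and the remaining vertices of P¹⁴. -/
theorem stmt_13 {V : Type*} [DecidableEq V] (P12 P14 P24 : Finset V)
    (A : V → V → V → Bool) (Q : V) (hQ : Q ∈ P24)
    (J12 J14 X : Finset V) (hJ12 : J12 ⊆ P12) (hJ14 : J14 ⊆ P14) (hX : X ⊆ P14)
    (δ : ℝ) (p : ℕ) (hδ : 0 < δ)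
    (hind : ∀ S ∈ J12, ∀ R ∈ J14, ¬ (A S R Q = true))
    (hXcard : (X.card : ℝ) ≤ δ * P14.card)
    (hcod : ∀ R ∈ P14 \ (J14 ∪ X),
      ((P12.filter (fun S => A S R Q = true)).card : ℝ) ≤ ((p : ℝ) + 1) * δ * P12.card)
    (hJ12card : (J12.card : ℝ) ≥ (p : ℝ) * δ * P12.card) :
    (∑ R ∈ P14, ((P12.filter (fun S => A S R Q = true)).card : ℝ))
      ≤ (J14.card : ℝ) * (1 - (p : ℝ) * δ) * P12.card
        + (X.card : ℝ) * P12.card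
        + ((P14.card : ℝ) - J14.card) * ((p : ℝ) + 1) * δ * P12.card :=
  stmt_13_general P12 P14 A Q J12 J14 X hJ12 hJ14 δ p hδ hind hcod hJ12card
end
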